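/- (Diagonal of Ψ_p equals one, used in Propositions 2 and 3.) For every p ∈ {0,…,N−1} and every ℓ₀ ∈ {−(L−1),…,L−1}, letting δ_{ℓ₀} : ℤ → ℂ be the function equal to 1 at ℓ₀ and 0 elsewhere: Σ_{q=0}^{N−1} ( |A_{pq}(δ_{ℓ₀})|² + |B_{pq}(δ_{ℓ₀})|² + |C_{pq}(δ_{ℓ₀})|² ) = 1. -/

import Mathlib

open Finset Matrix

/-- Normalized `N`-point DFT matrix: `[F]_{pn} = (1/√N)·e^{-2πipn/N}`. -/
noncomputable def Fdft (N : ℕ) : Matrix (Fin N) (Fin N) ℂ :=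
  Matrix.of fun p n : Fin N => (1 / ((Real.sqrt N : ℝ) : ℂ)) *
    Complex.exp (-(2 * (Real.pi : ℂ) * Complex.I * ((p : ℕ) : ℂ) * ((n : ℕ) : ℂ)) / (N : ℂ))

/-- Banded Toeplitz matrix with entries `g(m-n)`. -/
def Tzero (N : ℕ) (g : ℤ → ℂ) : Matrix (Fin N) (Fin N) ℂ :=
  Matrix.of fun m n : Fin N => g (((m : ℕ) : ℤ) - ((n : ℕ) : ℤ))

/-- Toeplitz matrix with entries `g(m-n+N)`. -/
def Tminus (N : ℕ) (g : ℤ → ℂ) : Matrix (Fin N) (Fin N) ℂ :=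
  Matrix.of fun m n : Fin N => g (((m : ℕ) : ℤ) - ((n : ℕ) : ℤ) + (N : ℤ))

/-- Toeplitz matrix with entries `g(m-n-N)`. -/
def Tplus (N : ℕ) (g : ℤ → ℂ) : Matrix (Fin N) (Fin N) ℂ :=
  Matrix.of fun m n : Fin N => g (((m : ℕ) : ℤ) - ((n : ℕ) : ℤ) - (N : ℤ))

/-- `A(g) = F·T⁻(g)·Fᴴ`. -/
noncomputable def Amat (N : ℕ) (g : ℤ → ℂ) : Matrix (Fin N) (Fin N) ℂ :=
  Fdft N * Tminus N g * (Fdft N)ᴴ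

/-- `B(g) = F·T⁰(g)·Fᴴ`. -/
noncomputable def Bmat (N : ℕ) (g : ℤ → ℂ) : Matrix (Fin N) (Fin N) ℂ :=
  Fdft N * Tzero N g * (Fdft N)ᴴ

/-- `C(g) = F·T⁺(g)·Fᴴ`. -/
noncomputable def Cmat (N : ℕ) (g : ℤ → ℂ) : Matrix (Fin N) (Fin N) ℂ :=
  Fdft N * Tplus N g * (Fdft N)ᴴ

/-! Since `F` is unitary, `Σ_q (|A_pq|² + |B_pq|² + |C_pq|²)`, the `(p, p)` entry of
`AAᴴ + BBᴴ + CCᴴ = F (T⁻T⁻ᴴ + T⁰T⁰ᴴ + T⁺T⁺ᴴ) Fᴴ`, is `1` as soon as the Toeplitz sum is the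
identity. For `g = δ_{ℓ₀}` the three Toeplitz matrices are the shift matrices with ones on the
diagonals `m - n = ℓ₀ - N, ℓ₀, ℓ₀ + N`. For such a shift `S` by `c`, `SSᴴ` is the diagonal
projection onto the rows `m` with `0 ≤ m - c < N`, and when `|ℓ₀| < N` every row lies in exactly
one of the three ranges. -/

theorem IsPrimitiveRoot.sum_range_pow_zpow {K : Type*} [Field K] {ζ : K} {N : ℕ}
    (hζ : IsPrimitiveRoot ζ N) (k : ℤ) :
    ∑ n ∈ range N, (ζ ^ k) ^ n = if (N : ℤ) ∣ k then (N : K) else 0 := by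
  split_ifs with hk
  · simp [(hζ.zpow_eq_one_iff_dvd k).mpr hk]
  · have hζN : (ζ ^ k) ^ N = 1 := by
      rw [← zpow_natCast, ← _root_.zpow_mul, mul_comm, _root_.zpow_mul, zpow_natCast,
        hζ.pow_eq_one, _root_.one_zpow]
    rw [geom_sum_eq (mt (hζ.zpow_eq_one_iff_dvd k).mp hk), hζN, sub_self, zero_div]

open Complex Real in
theorem Fdft_apply_mul_star_apply (N : ℕ) (p q n : Fin N) :
    Fdft N p n * star (Fdft N q n)
      = (N : ℂ)⁻¹ * (exp (2 * π * I / N) ^ ((q : ℕ) - (p : ℕ) : ℤ)) ^ (n : ℕ) := by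
  have hsqrt : ((√N : ℝ) : ℂ)⁻¹ * ((√N : ℝ) : ℂ)⁻¹ = (N : ℂ)⁻¹ := by
    rw [← mul_inv, ← ofReal_mul, Real.mul_self_sqrt (Nat.cast_nonneg N), ofReal_natCast]
  rw [← zpow_natCast, ← _root_.zpow_mul, ← exp_int_mul]
  simp only [Fdft, of_apply, star_mul', star_def, ← exp_conj, one_div, map_inv₀, conj_ofReal]
  rw [mul_mul_mul_comm, hsqrt, ← Complex.exp_add]
  congr 2
  simp only [map_div₀, map_neg, map_mul, conj_I, conj_natCast, conj_ofReal, map_ofNat]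
  push_cast
  ring

theorem Fdft_mem_unitaryGroup (N : ℕ) : Fdft N ∈ unitaryGroup (Fin N) ℂ := by
  rw [mem_unitaryGroup_iff]
  ext p q
  rcases Nat.eq_zero_or_pos N with rfl | hN
  · exact p.elim0
  have hω := Complex.isPrimitiveRoot_exp N hN.ne'
  rw [mul_apply]
  simp only [star_apply, Fdft_apply_mul_star_apply, ← mul_sum]
  rw [Fin.sum_univ_eq_sum_range (fun n => (Complex.exp _ ^ _) ^ n), hω.sum_range_pow_zpow,
    one_apply]
  have hdvd : (N : ℤ) ∣ (q : ℕ) - (p : ℕ) ↔ p = q := by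
    refine ⟨fun h => Fin.ext ?_, fun h => by simp [h]⟩
    have := Int.eq_zero_of_abs_lt_dvd h (abs_sub_lt_iff.mpr (by omega))
    omega
  simp only [hdvd]
  split_ifs <;> simp [hN.ne']

def gramSum {R m n : Type*} [Semiring R] [StarRing R] [Fintype n] (X Y Z : Matrix m n R) :
    Matrix m m R :=
  X * Xᴴ + Y * Yᴴ + Z * Zᴴ

def shiftMatrix (R : Type*) [Zero R] [One R] (N : ℕ) (c : ℤ) : Matrix (Fin N) (Fin N) R :=
  of fun m n => if ((m : ℕ) : ℤ) - (n : ℕ) = c then 1 else 0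

theorem Fin.sum_ite_val_eq {R : Type*} [AddCommMonoidWithOne R] (N : ℕ) (c : ℤ) :
    ∑ n : Fin N, (if ((n : ℕ) : ℤ) = c then (1 : R) else 0)
      = if 0 ≤ c ∧ c < N then 1 else 0 := by
  split_ifs with hc
  · have hn : ∀ n : Fin N, ((n : ℕ) : ℤ) = c ↔ n = ⟨c.toNat, by omega⟩ := fun n => by
      simp only [Fin.ext_iff]; omega
    simp only [hn, Fintype.sum_ite_eq']
  · exact Finset.sum_eq_zero fun n _ => if_neg (by omega)

theorem shiftMatrix_mul_conjTranspose {R : Type*} [Semiring R] [StarRing R] (N : ℕ) (c : ℤ) :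
    shiftMatrix R N c * (shiftMatrix R N c)ᴴ
      = diagonal fun m : Fin N =>
          if 0 ≤ ((m : ℕ) : ℤ) - c ∧ ((m : ℕ) : ℤ) - c < N then 1 else 0 := by
  ext m m'
  simp only [mul_apply, conjTranspose_apply, shiftMatrix, of_apply, apply_ite star, star_one,
    star_zero, mul_ite, mul_one, mul_zero]
  rcases eq_or_ne m m' with rfl | hm
  · rw [diagonal_apply_eq, ← Fin.sum_ite_val_eq]
    refine Finset.sum_congr rfl fun n _ => ?_
    split_ifs <;> first | rfl | (exfalso; omega)
  · rw [diagonal_apply_ne _ hm]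
    rw [Ne, Fin.ext_iff] at hm
    exact Finset.sum_eq_zero fun n _ => by split_ifs <;> first | rfl | (exfalso; omega)

theorem Tminus_delta_eq_shiftMatrix (N : ℕ) (ℓ₀ : ℤ) :
    Tminus N (fun ℓ => if ℓ = ℓ₀ then 1 else 0) = shiftMatrix ℂ N (ℓ₀ - N) := by
  ext m n
  simp only [Tminus, shiftMatrix, of_apply, ← eq_sub_iff_add_eq]

theorem Tzero_delta_eq_shiftMatrix (N : ℕ) (ℓ₀ : ℤ) :
    Tzero N (fun ℓ => if ℓ = ℓ₀ then 1 else 0) = shiftMatrix ℂ N ℓ₀ := rfl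

theorem Tplus_delta_eq_shiftMatrix (N : ℕ) (ℓ₀ : ℤ) :
    Tplus N (fun ℓ => if ℓ = ℓ₀ then 1 else 0) = shiftMatrix ℂ N (ℓ₀ + N) := by
  ext m n
  simp only [Tplus, shiftMatrix, of_apply, sub_eq_iff_eq_add]

theorem gramSum_shiftMatrix_eq_one {R : Type*} [Semiring R] [StarRing R] (N : ℕ) (c : ℤ)
    (hc : |c| < N) :
    gramSum (shiftMatrix R N (c - N)) (shiftMatrix R N c) (shiftMatrix R N (c + N)) = 1 := by
  simp only [gramSum, shiftMatrix_mul_conjTranspose, diagonal_add, ← diagonal_one]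
  congr 1
  funext m
  have := abs_lt.mp hc
  have := m.isLt
  split_ifs <;> first | (exfalso; omega) | simp

theorem gramSum_apply_self {𝕜 m n : Type*} [RCLike 𝕜] [Fintype n] (X Y Z : Matrix m n 𝕜)
    (i : m) :
    gramSum X Y Z i i = ((∑ j, (‖X i j‖ ^ 2 + ‖Y i j‖ ^ 2 + ‖Z i j‖ ^ 2) : ℝ) : 𝕜) := by
  simp only [gramSum, Matrix.add_apply, mul_apply, conjTranspose_apply, RCLike.star_def,
    RCLike.mul_conj, ← Finset.sum_add_distrib]
  push_cast
  rfl

theorem gramSum_unitary_conj {R n : Type*} [Semiring R] [StarRing R] [Fintype n] [DecidableEq n]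
    {U : Matrix n n R} (hU : U ∈ unitary (Matrix n n R)) (X Y Z : Matrix n n R) :
    gramSum (U * X * Uᴴ) (U * Y * Uᴴ) (U * Z * Uᴴ) = U * gramSum X Y Z * Uᴴ := by
  have hUU : Uᴴ * U = 1 := Unitary.star_mul_self_of_mem hU
  simp only [gramSum, conjTranspose_mul, conjTranspose_conjTranspose, Matrix.mul_add,
    Matrix.add_mul, Matrix.mul_assoc, ← Matrix.mul_assoc Uᴴ U, hUU, Matrix.one_mul]

theorem stmt12_general (N L : ℕ) (hLN : L ≤ N) (p : Fin N)
    (ℓ₀ : ℤ) (hℓ₀ : ℓ₀ ∈ Finset.Icc (-(L : ℤ) + 1) ((L : ℤ) - 1)) :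
    ∑ q : Fin N,
      (‖Amat N (fun ℓ => if ℓ = ℓ₀ then 1 else 0) p q‖ ^ 2
      + ‖Bmat N (fun ℓ => if ℓ = ℓ₀ then 1 else 0) p q‖ ^ 2
      + ‖Cmat N (fun ℓ => if ℓ = ℓ₀ then 1 else 0) p q‖ ^ 2) = 1 := by
  have hℓ₀N : |ℓ₀| < N := abs_lt.mpr (by rw [Finset.mem_Icc] at hℓ₀; omega)
  have hgram : gramSum (Amat N fun ℓ => if ℓ = ℓ₀ then 1 else 0)
      (Bmat N fun ℓ => if ℓ = ℓ₀ then 1 else 0) (Cmat N fun ℓ => if ℓ = ℓ₀ then 1 else 0) = 1 := by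
    rw [Amat, Bmat, Cmat, gramSum_unitary_conj (Fdft_mem_unitaryGroup N),
      Tminus_delta_eq_shiftMatrix, Tzero_delta_eq_shiftMatrix, Tplus_delta_eq_shiftMatrix,
      gramSum_shiftMatrix_eq_one N ℓ₀ hℓ₀N, Matrix.mul_one]
    exact Unitary.mul_star_self_of_mem (Fdft_mem_unitaryGroup N)
  have hpp := congr_fun₂ hgram p p
  rw [gramSum_apply_self, one_apply_eq] at hpp
  exact Complex.ofReal_eq_one.mp hpp

/-- Diagonal of `Ψ_p` equals one, used in Propositions 2 and 3: for the delta
function `δ_{ℓ₀}` at any lag `ℓ₀ ∈ {-(L-1),…,L-1}`,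
`∑_{q=0}^{N-1} (|A_{pq}(δ_{ℓ₀})|² + |B_{pq}(δ_{ℓ₀})|² + |C_{pq}(δ_{ℓ₀})|²) = 1`. -/
theorem stmt12 (N L : ℕ) (hL1 : 1 ≤ L) (hLN : L ≤ N) (p : Fin N)
    (ℓ₀ : ℤ) (hℓ₀ : ℓ₀ ∈ Finset.Icc (-(L : ℤ) + 1) ((L : ℤ) - 1)) :
    ∑ q : Fin N,
      (‖Amat N (fun ℓ => if ℓ = ℓ₀ then 1 else 0) p q‖ ^ 2
      + ‖Bmat N (fun ℓ => if ℓ = ℓ₀ then 1 else 0) p q‖ ^ 2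
      + ‖Cmat N (fun ℓ => if ℓ = ℓ₀ then 1 else 0) p q‖ ^ 2) = 1 :=
  stmt12_general N L hLN p ℓ₀ hℓ₀
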